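/- Suppose that for every α, ε > 0 there exists a probability-measure-preserving F₂-system and a non-negative f ∈ L^∞ with ‖f‖_{L¹} ≤ α and sup_n 𝒜_{2n} f ≥ 1 − ε outside a set of measure ε. Then there exists a probability-measure-preserving F₂-system and f ∈ L¹ with sup_n 𝒜_{2n} f(x) = ∞ for almost every x. In particular, the pointwise ergodic theorem for spherical averages on F₂ fails in L¹. -/

import Mathlib

open MeasureTheory

/-- The spherical averaging operator
`𝒜_n f(x) = (4·3^{n-1})⁻¹ Σ_{|g| = n} f(T_g⁻¹ x)`. -/
noncomputable def sphAvg {X : Type*} (T : FreeGroup (Fin 2) → X → X) (n : ℕ)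
    (f : X → ℝ) (x : X) : ℝ :=
  (4 * 3 ^ (n - 1) : ℝ)⁻¹ *
    ∑ᶠ (g : FreeGroup (Fin 2)) (_ : FreeGroup.norm g = n), f (T g⁻¹ x)

/-!
Apply the hypothesis with `ε = 2^{-(m+1)}` and `α = ε / (m + 1)` for every `m`, and let `F₂` act
diagonally on the product of the resulting systems, equipped with the product measure. The function
`f(x) = ∑ₘ (m + 1) fₘ(xₘ)` has `‖f‖₁ ≤ ∑ₘ 2^{-(m+1)} < ∞`. Spherical averages are positive and
commute with the coordinate projections, so `sup_n 𝒜_{2n} f(x) ≥ (m + 1) / 2` whenever `xₘ` avoids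
the `m`-th exceptional set; by Borel–Cantelli almost every `x` avoids all but finitely many of them.
-/

open Filter
open scoped ENNReal

theorem FreeGroup.finite_setOf_norm_eq {α : Type*} [DecidableEq α] [Finite α] (n : ℕ) :
    {g : FreeGroup α | g.norm = n}.Finite :=
  ((List.finite_length_eq _ n).preimage FreeGroup.toWord_injective.injOn).subset fun _ hg => hg

section SphericalAverages

variable {X Y : Type*}

theorem sphAvg_eq_sum (T : FreeGroup (Fin 2) → X → X) (n : ℕ) (f : X → ℝ) (x : X) :
    sphAvg T n f x = (4 * 3 ^ (n - 1) : ℝ)⁻¹ *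
      ∑ g ∈ (FreeGroup.finite_setOf_norm_eq n).toFinset, f (T g⁻¹ x) := by
  rw [sphAvg, ← finsum_mem_eq_finite_toFinset_sum]
  rfl

theorem mul_sphAvg_le_sphAvg {T : FreeGroup (Fin 2) → X → X} {S : FreeGroup (Fin 2) → Y → Y}
    {f : X → ℝ} {h : Y → ℝ} {x : X} {y : Y} {c : ℝ}
    (hle : ∀ g, c * f (T g x) ≤ h (S g y)) (n : ℕ) :
    c * sphAvg T n f x ≤ sphAvg S n h y := by
  rw [sphAvg_eq_sum, sphAvg_eq_sum, mul_left_comm, Finset.mul_sum]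
  gcongr with g
  exact hle g⁻¹

end SphericalAverages

theorem EReal.iSup_coe_eq_top_of_frequently {a : ℕ → ℕ → ℝ} {b : ℕ → ℝ} {c : ℝ} (hc : 0 < c)
    (hab : ∀ m n, (m + 1) * a m n ≤ b n)
    (hfreq : ∃ᶠ m in atTop, (c : EReal) ≤ ⨆ n, (a m n : EReal)) :
    ⨆ n, (b n : EReal) = ⊤ := by
  refine (EReal.eq_top_iff_forall_lt _).2 fun r => ?_
  obtain ⟨N, hN⟩ := exists_nat_gt (2 * r / c)
  obtain ⟨m, hNm, hm⟩ := hfreq.forall_exists_of_atTop N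
  obtain ⟨n, hn⟩ := lt_iSup_iff.1 ((EReal.coe_lt_coe_iff.2 (half_lt_self hc)).trans_le hm)
  have hcn : c / 2 < a m n := EReal.coe_lt_coe_iff.1 hn
  have hrm : r < (m + 1) * (c / 2) := by
    have : (N : ℝ) ≤ m := Nat.cast_le.2 hNm
    rw [div_lt_iff₀ hc] at hN
    nlinarith
  refine (EReal.coe_lt_coe_iff.2 ?_).trans_le (le_iSup (fun n => (b n : EReal)) n)
  calc r < (m + 1) * (c / 2) := hrm
    _ ≤ (m + 1) * a m n := by gcongr
    _ ≤ b n := hab m n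

theorem ae_forall_comp_lt_top_of_lintegral_ne_top {α G : Type*} [MeasurableSpace α] [Countable G]
    {ν : Measure α} {T : G → α → α} (hT : ∀ g, MeasurePreserving (T g) ν ν) {F : α → ℝ≥0∞}
    (hF : AEMeasurable F ν) (hint : ∫⁻ x, F x ∂ν ≠ ∞) : ∀ᵐ x ∂ν, ∀ g, F (T g x) < ∞ :=
  ae_all_iff.2 fun g => (hT g).quasiMeasurePreserving.ae (ae_lt_top' hF hint)

section InfiniteProduct

open Measure

theorem measurePreserving_piMap_infinitePi {ι : Type*} {X : ι → Type*}
    [∀ i, MeasurableSpace (X i)] {μ : ∀ i, Measure (X i)} [∀ i, IsProbabilityMeasure (μ i)]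
    {T : ∀ i, X i → X i} (hT : ∀ i, MeasurePreserving (T i) (μ i) (μ i)) :
    MeasurePreserving (Pi.map T) (infinitePi μ) (infinitePi μ) where
  measurable := measurable_pi_lambda _ fun i => (hT i).measurable.comp (measurable_pi_apply i)
  map_eq := (infinitePi_map_pi μ fun i => (hT i).measurable).trans <| by
    simp only [(hT _).map_eq]

noncomputable def weightedSum {X : ℕ → Type*} (f : ∀ m, X m → ℝ) (x : ∀ m, X m) : ℝ≥0∞ :=
  ∑' m : ℕ, ENNReal.ofReal ((m + 1) * f m (x m))

theorem mul_le_toReal_weightedSum {X : ℕ → Type*} {f : ∀ m, X m → ℝ} {x : ∀ m, X m}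
    (hx : weightedSum f x ≠ ∞) (m : ℕ) : (m + 1) * f m (x m) ≤ (weightedSum f x).toReal :=
  calc (m + 1) * f m (x m) ≤ (ENNReal.ofReal ((m + 1) * f m (x m))).toReal := by
        rw [ENNReal.toReal_ofReal']; exact le_max_left _ _
    _ ≤ (weightedSum f x).toReal :=
        ENNReal.toReal_mono hx (ENNReal.le_tsum (f := fun m => ENNReal.ofReal _) m)

variable {X : ℕ → Type*} [∀ m, MeasurableSpace (X m)] {f : ∀ m, X m → ℝ}

theorem measurable_weightedSum (hf : ∀ m, Measurable (f m)) : Measurable (weightedSum f) :=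
  Measurable.tsum fun m => (((hf m).comp (measurable_pi_apply m)).const_mul _).ennreal_ofReal

variable {μ : ∀ m, Measure (X m)} [∀ m, IsProbabilityMeasure (μ m)]

theorem infinitePi_ae_eventually_notMem {s : ∀ m, Set (X m)} (hs : ∑' m, μ m (s m) ≠ ∞) :
    ∀ᵐ x ∂infinitePi μ, ∀ᶠ m in atTop, x m ∉ s m := by
  refine ae_eventually_notMem (ne_top_of_le_ne_top hs (ENNReal.tsum_le_tsum fun m => ?_))
  calc infinitePi μ ((fun x => x m) ⁻¹' s m)
      ≤ (infinitePi μ).map (fun x => x m) (s m) :=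
        le_map_apply (measurable_pi_apply m).aemeasurable _
    _ = μ m (s m) := by rw [infinitePi_map_eval]

theorem lintegral_weightedSum (hf : ∀ m, Measurable (f m)) (hfi : ∀ m, Integrable (f m) (μ m))
    (hf0 : ∀ m, 0 ≤ f m) :
    ∫⁻ x, weightedSum f x ∂infinitePi μ = ∑' m : ℕ, ENNReal.ofReal ((m + 1) * ∫ y, f m y ∂μ m) := by
  unfold weightedSum
  rw [lintegral_tsum fun m => (Measurable.aemeasurable (by have := hf m; fun_prop))]
  congr 1 with m
  rw [← integral_const_mul, ofReal_integral_eq_lintegral_ofReal ((hfi m).const_mul _)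
    (ae_of_all _ fun y => mul_nonneg (by positivity) (hf0 m y))]
  exact (measurePreserving_eval_infinitePi μ m).lintegral_comp
    (((hf m).const_mul _).ennreal_ofReal)

end InfiniteProduct

/-- If for every `α, ε > 0` there is a probability-measure-preserving `F₂`-system and a
non-negative `f ∈ L^∞` with `‖f‖₁ ≤ α` and `sup_n 𝒜_{2n} f ≥ 1 − ε` outside a set of
measure `ε`, then there is a probability-measure-preserving `F₂`-system and an `f ∈ L¹`
with `sup_n 𝒜_{2n} f(x) = ∞` for almost every `x`: the pointwise ergodic theorem for
spherical averages on `F₂` fails in `L¹`. -/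
theorem no_L1_pointwise_ergodic_theorem
    (H : ∀ α ε : ℝ, 0 < α → 0 < ε →
      ∃ (X : Type) (_ : MeasurableSpace X) (μ : Measure X)
        (_ : IsProbabilityMeasure μ) (T : FreeGroup (Fin 2) → X → X) (f : X → ℝ),
        T 1 = id ∧ (∀ g h : FreeGroup (Fin 2), T (g * h) = T g ∘ T h) ∧
        (∀ g : FreeGroup (Fin 2), MeasurePreserving (T g) μ μ) ∧
        Measurable f ∧ (∀ x, 0 ≤ f x) ∧ (∃ C : ℝ, ∀ x, f x ≤ C) ∧
        (∫ x, f x ∂μ ≤ α) ∧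
        μ {x | ¬ ((1 - ε : ℝ) : EReal) ≤ ⨆ n : ℕ, ((sphAvg T (2 * n) f x : ℝ) : EReal)}
          ≤ ENNReal.ofReal ε) :
    ∃ (X : Type) (_ : MeasurableSpace X) (μ : Measure X)
      (_ : IsProbabilityMeasure μ) (T : FreeGroup (Fin 2) → X → X) (f : X → ℝ),
      T 1 = id ∧ (∀ g h : FreeGroup (Fin 2), T (g * h) = T g ∘ T h) ∧
      (∀ g : FreeGroup (Fin 2), MeasurePreserving (T g) μ μ) ∧
      Integrable f μ ∧
      ∀ᵐ x ∂μ, (⨆ n : ℕ, ((sphAvg T (2 * n) f x : ℝ) : EReal)) = ⊤ := by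
  choose X _ μ _ T f hT1 hTmul hTμ hf hf0 hfC hfα hbad using fun m : ℕ =>
    H ((1 / 2) ^ (m + 1) / (m + 1)) ((1 / 2) ^ (m + 1)) (by positivity) (by positivity)
  have hε : ∑' m : ℕ, ENNReal.ofReal ((1 / 2) ^ (m + 1)) ≠ ∞ := by
    rw [← ENNReal.ofReal_tsum_of_nonneg (fun _ => by positivity)
      ((summable_nat_add_iff 1).2 summable_geometric_two)]
    exact ENNReal.ofReal_ne_top
  have hfi (m : ℕ) : Integrable (f m) (μ m) :=
    .of_bound (hf m).aestronglyMeasurable (hfC m).choose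
      (ae_of_all _ fun x => (Real.norm_of_nonneg (hf0 m x)).trans_le ((hfC m).choose_spec x))
  have hint : ∫⁻ x, weightedSum f x ∂Measure.infinitePi μ ≠ ∞ := by
    refine (lintegral_weightedSum hf hfi hf0).trans_ne (ne_top_of_le_ne_top hε
      (ENNReal.tsum_le_tsum fun m => ENNReal.ofReal_le_ofReal ?_))
    exact (le_div_iff₀' (by positivity)).1 (hfα m)
  set TX : FreeGroup (Fin 2) → (∀ m, X m) → ∀ m, X m := fun g => Pi.map fun m => T m g
  have hTX (g) : MeasurePreserving (TX g) (Measure.infinitePi μ) (Measure.infinitePi μ) :=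
    measurePreserving_piMap_infinitePi fun m => hTμ m g
  refine ⟨∀ m, X m, inferInstance, Measure.infinitePi μ, inferInstance, TX,
    fun x => (weightedSum f x).toReal, ?_, ?_, hTX,
    integrable_toReal_of_lintegral_ne_top (measurable_weightedSum hf).aemeasurable hint, ?_⟩
  · funext x m
    simp [TX, hT1]
  · intro g h
    funext x m
    simp [TX, hTmul]
  -- `toReal` sends `∞` to `0`, so `f ≥ (m + 1) fₘ` needs `weightedSum f` finite along the orbit.
  filter_upwards [ae_forall_comp_lt_top_of_lintegral_ne_top hTX
      (measurable_weightedSum hf).aemeasurable hint,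
    infinitePi_ae_eventually_notMem (ne_top_of_le_ne_top hε (ENNReal.tsum_le_tsum hbad))]
    with x hfin hgood
  refine EReal.iSup_coe_eq_top_of_frequently one_half_pos
    (fun m n => mul_sphAvg_le_sphAvg (fun g => mul_le_toReal_weightedSum (hfin g).ne m) _)
    (hgood.frequently.mono fun m hm => le_trans ?_ (not_not.1 hm))
  have : (1 / 2 : ℝ) ^ (m + 1) ≤ 1 / 2 :=
    pow_le_of_le_one (by norm_num) (by norm_num) m.succ_ne_zero
  exact EReal.coe_le_coe_iff.2 (by linarith)
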